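/- For a quaternion matrix Q ∈ ℍ^{N₁×N₂}, the number of strictly positive diagonal entries of Λ is the same for every QSVD Q = U Λ Vᴴ, and this common number r satisfies 2r = rank(f(Q)), the rank of the isomorphic complex representation f(Q) ∈ ℂ^{2N₁×2N₂}. -/

import Mathlib

open Matrix

noncomputable section

/-- The two complex components of the Cayley–Dickson form of a quaternion. -/
def qC1 (q : Quaternion ℝ) : ℂ := ⟨q.re, q.imI⟩
def qC2 (q : Quaternion ℝ) : ℂ := ⟨q.imJ, q.imK⟩

/-- The isomorphic complex representation `f` of a quaternion matrix:
`f(Q) = [[Z₁, Z₂], [−Z₂*, Z₁*]]` with `Z₁ = Q₀ + Q₁ i`, `Z₂ = Q₂ + Q₃ i`. -/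
def qf {N₁ N₂ : ℕ} (Q : Matrix (Fin N₁) (Fin N₂) (Quaternion ℝ)) :
    Matrix (Fin N₁ ⊕ Fin N₁) (Fin N₂ ⊕ Fin N₂) ℂ :=
  Matrix.fromBlocks (Matrix.of fun m n => qC1 (Q m n)) (Matrix.of fun m n => qC2 (Q m n))
    (Matrix.of fun m n => -star (qC2 (Q m n))) (Matrix.of fun m n => star (qC1 (Q m n)))

/-- A square quaternion matrix is unitary if `U Uᴴ = Uᴴ U = I`. -/
def qUnitary {N : ℕ} (U : Matrix (Fin N) (Fin N) (Quaternion ℝ)) : Prop :=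
  U * Uᴴ = 1 ∧ Uᴴ * U = 1

/-- A rectangular real matrix is "rectangular diagonal with nonnegative diagonal entries". -/
def recDiagNonneg {N₁ N₂ : ℕ} (Λ : Matrix (Fin N₁) (Fin N₂) ℝ) : Prop :=
  (∀ (m : Fin N₁) (n : Fin N₂), (m : ℕ) ≠ (n : ℕ) → Λ m n = 0) ∧ ∀ m n, 0 ≤ Λ m n

/-- View a real matrix as a quaternion matrix. -/
def rToQ {N₁ N₂ : ℕ} (Λ : Matrix (Fin N₁) (Fin N₂) ℝ) :
    Matrix (Fin N₁) (Fin N₂) (Quaternion ℝ) :=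
  Λ.map (algebraMap ℝ (Quaternion ℝ))

/-- `IsQSVD Q U Λ V` : `Q = U Λ Vᴴ` is a quaternion singular value decomposition. -/
def IsQSVD {N₁ N₂ : ℕ} (Q : Matrix (Fin N₁) (Fin N₂) (Quaternion ℝ))
    (U : Matrix (Fin N₁) (Fin N₁) (Quaternion ℝ))
    (Λ : Matrix (Fin N₁) (Fin N₂) ℝ)
    (V : Matrix (Fin N₂) (Fin N₂) (Quaternion ℝ)) : Prop :=
  qUnitary U ∧ qUnitary V ∧ recDiagNonneg Λ ∧ Q = U * rToQ Λ * Vᴴ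

/-- The quaternion nuclear norm: `½ Σ_j sqrt(λ_j)`, `λ_j` the eigenvalues of `f(X)ᴴ f(X)`. -/
noncomputable def qNuclearNorm {N₁ N₂ : ℕ}
    (X : Matrix (Fin N₁) (Fin N₂) (Quaternion ℝ)) : ℝ :=
  (1 / 2) * ∑ j, Real.sqrt ((Matrix.isHermitian_conjTranspose_mul_self (qf X)).eigenvalues j)

/-- The quaternion Frobenius norm. -/
noncomputable def qFrob {M N : ℕ} (X : Matrix (Fin M) (Fin N) (Quaternion ℝ)) : ℝ :=
  Real.sqrt (∑ m, ∑ n, ‖X m n‖ ^ 2)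

/-- The spectral norm of a quaternion matrix: the square root of the largest eigenvalue
of `f(E)ᴴ f(E)`. -/
noncomputable def qSpectralNorm {N₁ N₂ : ℕ}
    (E : Matrix (Fin N₁) (Fin N₂) (Quaternion ℝ)) : ℝ :=
  ⨆ j, Real.sqrt ((Matrix.isHermitian_conjTranspose_mul_self (qf E)).eigenvalues j)

/-!
The complex representation `f` is multiplicative and commutes with `ᴴ`, so it sends the unitary
factors of a QSVD `Q = U Λ Vᴴ` to invertible complex matrices and `rank f(Q) = rank f(Λ)`.
Since `f(Λ) = diag(Λ, Λ)` has at most one nonzero entry in each row, its Gram matrix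
`f(Λ)ᴴ f(Λ)` is diagonal, so its rank is the number of its nonzero columns: twice the number of
nonzero columns of `Λ`, which are exactly the columns carrying a positive diagonal entry.
This count therefore depends only on `Q`.
-/

open scoped Quaternion

@[simp] lemma qC1_zero : qC1 0 = 0 := rfl

@[simp] lemma qC2_zero : qC2 0 = 0 := rfl

@[simp] lemma qC1_one : qC1 1 = 1 := rfl

@[simp] lemma qC2_one : qC2 1 = 0 := rfl

def qC1AddHom : ℍ[ℝ] →+ ℂ where
  toFun := qC1
  map_zero' := rfl
  map_add' _ _ := rfl

def qC2AddHom : ℍ[ℝ] →+ ℂ where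
  toFun := qC2
  map_zero' := rfl
  map_add' _ _ := rfl

-- Cayley–Dickson: `q = qC1 q + qC2 q * j` and `j * z = conj z * j` for complex `z`.
lemma qC1_mul (a b : ℍ[ℝ]) : qC1 (a * b) = qC1 a * qC1 b - qC2 a * star (qC2 b) := by
  apply Complex.ext <;> simp [qC1, qC2] <;> ring

lemma qC2_mul (a b : ℍ[ℝ]) : qC2 (a * b) = qC1 a * qC2 b + qC2 a * star (qC1 b) := by
  apply Complex.ext <;> simp [qC1, qC2] <;> ring

lemma qC1_star (a : ℍ[ℝ]) : qC1 (star a) = star (qC1 a) := by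
  apply Complex.ext <;> simp [qC1]

lemma qC2_star (a : ℍ[ℝ]) : qC2 (star a) = -qC2 a := by
  apply Complex.ext <;> simp [qC2]

lemma qC1_sum {ι : Type*} (s : Finset ι) (f : ι → ℍ[ℝ]) :
    qC1 (∑ i ∈ s, f i) = ∑ i ∈ s, qC1 (f i) :=
  map_sum qC1AddHom f s

lemma qC2_sum {ι : Type*} (s : Finset ι) (f : ι → ℍ[ℝ]) :
    qC2 (∑ i ∈ s, f i) = ∑ i ∈ s, qC2 (f i) :=
  map_sum qC2AddHom f s

lemma qf_mul {N₁ N₂ N₃ : ℕ} (A : Matrix (Fin N₁) (Fin N₂) ℍ[ℝ])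
    (B : Matrix (Fin N₂) (Fin N₃) ℍ[ℝ]) : qf (A * B) = qf A * qf B := by
  simp only [qf, fromBlocks_multiply, fromBlocks_inj]
  refine ⟨?_, ?_, ?_, ?_⟩ <;> ext m n <;>
    simp [mul_apply, qC1_sum, qC2_sum, qC1_mul, qC2_mul, Finset.sum_add_distrib,
      Finset.sum_sub_distrib, star_sum] <;>
    ring

lemma qf_one {N : ℕ} : qf (1 : Matrix (Fin N) (Fin N) ℍ[ℝ]) = 1 := by
  simp only [qf, ← fromBlocks_one, fromBlocks_inj]
  refine ⟨?_, ?_, ?_, ?_⟩ <;> ext m n <;> by_cases h : m = n <;> simp [one_apply, h]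

lemma qf_conjTranspose {N₁ N₂ : ℕ} (A : Matrix (Fin N₁) (Fin N₂) ℍ[ℝ]) :
    qf Aᴴ = (qf A)ᴴ := by
  simp only [qf, fromBlocks_conjTranspose, fromBlocks_inj]
  refine ⟨?_, ?_, ?_, ?_⟩ <;> ext m n <;> simp [qC1_star, qC2_star]

section NonzeroColumns

variable {m n R : Type*} [Fintype m] [Fintype n] [Field R] [PartialOrder R] [StarRing R]
  [StarOrderedRing R] [DecidableEq R]

theorem Matrix.rank_eq_card_nonzero_cols (A : Matrix m n R)
    (hA : ∀ i j j', A i j ≠ 0 → A i j' ≠ 0 → j = j') :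
    A.rank = Fintype.card {j // ∃ i, A i j ≠ 0} := by
  classical
  have hgram : Aᴴ * A = diagonal fun j => star (Aᵀ j) ⬝ᵥ Aᵀ j := by
    ext j j'
    rcases eq_or_ne j j' with rfl | hne
    · simp [mul_apply, dotProduct]
    · rw [diagonal_apply_ne _ hne, mul_apply]
      refine Finset.sum_eq_zero fun i _ => ?_
      by_cases hij : A i j = 0
      · simp [hij]
      · simp [not_not.1 fun hij' => hne (hA i j j' hij hij')]
  rw [← rank_conjTranspose_mul_self, hgram, rank_diagonal]
  refine Fintype.card_congr (Equiv.subtypeEquivRight fun j => ?_)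
  simp [dotProduct_star_self_eq_zero, funext_iff]

end NonzeroColumns

lemma qf_rToQ {N₁ N₂ : ℕ} (Λ : Matrix (Fin N₁) (Fin N₂) ℝ) :
    qf (rToQ Λ) = fromBlocks (Λ.map (↑)) 0 0 (Λ.map (↑)) := by
  simp only [qf, rToQ, fromBlocks_inj]
  refine ⟨?_, ?_, ?_, ?_⟩ <;> ext m n <;> apply Complex.ext <;> simp [qC1, qC2]

open scoped ComplexOrder in
lemma rank_qf_rToQ {N₁ N₂ : ℕ} (Λ : Matrix (Fin N₁) (Fin N₂) ℝ)
    (hΛ : ∀ (m : Fin N₁) (n : Fin N₂), (m : ℕ) ≠ (n : ℕ) → Λ m n = 0) :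
    (qf (rToQ Λ)).rank = 2 * Fintype.card {n // ∃ m, Λ m n ≠ 0} := by
  have hrow : ∀ m n n', Λ m n ≠ 0 → Λ m n' ≠ 0 → n = n' := fun m n n' h h' =>
    Fin.ext <| by have := mt (hΛ m n) h; have := mt (hΛ m n') h'; omega
  rw [qf_rToQ, rank_eq_card_nonzero_cols]
  · rw [Fintype.card_congr (Equiv.subtypeSum), Fintype.card_sum, two_mul]
    simp [Sum.exists]
  · rintro (m | m) (n | n) (n' | n') h h' <;> simp_all [hrow m n n']

lemma card_diag_pos_eq_card_nonzero_cols {N₁ N₂ : ℕ} {Λ : Matrix (Fin N₁) (Fin N₂) ℝ}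
    (hΛ : recDiagNonneg Λ) :
    (Finset.univ.filter fun p : Fin N₁ × Fin N₂ => (p.1 : ℕ) = (p.2 : ℕ) ∧ 0 < Λ p.1 p.2).card =
      Fintype.card {n // ∃ m, Λ m n ≠ 0} := by
  rw [Fintype.card_subtype]
  refine Finset.card_bij (fun p _ => p.2) ?_ ?_ ?_
  · rintro ⟨m, n⟩ hp
    simp only [Finset.mem_filter, Finset.mem_univ, true_and] at hp ⊢
    exact ⟨m, hp.2.ne'⟩
  · rintro ⟨m, n⟩ hp ⟨m', n'⟩ hp' (rfl : n = n')
    simp only [Finset.mem_filter, Finset.mem_univ, true_and] at hp hp'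
    rw [Fin.ext (hp.1.trans hp'.1.symm)]
  · intro n hn
    obtain ⟨m, hm⟩ := (Finset.mem_filter.1 hn).2
    exact ⟨(m, n), Finset.mem_filter.2 ⟨Finset.mem_univ _, not_not.1 (mt (hΛ.1 m n) hm),
      (hΛ.2 m n).lt_of_ne' hm⟩, rfl⟩

lemma qUnitary.conjTranspose {N : ℕ} {U : Matrix (Fin N) (Fin N) ℍ[ℝ]} (hU : qUnitary U) :
    qUnitary Uᴴ := by
  rw [qUnitary, conjTranspose_conjTranspose]
  exact hU.symm

lemma qUnitary.isUnit_det_qf {N : ℕ} {U : Matrix (Fin N) (Fin N) ℍ[ℝ]} (hU : qUnitary U) :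
    IsUnit (qf U).det :=
  isUnit_det_of_right_inverse (B := (qf U)ᴴ) (by rw [← qf_conjTranspose, ← qf_mul, hU.1, qf_one])

lemma IsQSVD.rank_qf {N₁ N₂ : ℕ} {Q : Matrix (Fin N₁) (Fin N₂) ℍ[ℝ]}
    {U : Matrix (Fin N₁) (Fin N₁) ℍ[ℝ]} {Λ : Matrix (Fin N₁) (Fin N₂) ℝ}
    {V : Matrix (Fin N₂) (Fin N₂) ℍ[ℝ]} (h : IsQSVD Q U Λ V) :
    (qf Q).rank = 2 * Fintype.card {n // ∃ m, Λ m n ≠ 0} := by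
  obtain ⟨hU, hV, hΛ, rfl⟩ := h
  rw [qf_mul, qf_mul, rank_mul_eq_left_of_isUnit_det _ _ hV.conjTranspose.isUnit_det_qf,
    rank_mul_eq_right_of_isUnit_det _ _ hU.isUnit_det_qf, rank_qf_rToQ Λ hΛ.1]

/-- the number of strictly positive diagonal entries of `Λ` is the same for
every QSVD of `Q`, and twice this number equals the rank of `f(Q)`. -/
theorem qsvd_rank {N₁ N₂ : ℕ} (Q : Matrix (Fin N₁) (Fin N₂) (Quaternion ℝ))
    (U U' : Matrix (Fin N₁) (Fin N₁) (Quaternion ℝ))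
    (Λ Λ' : Matrix (Fin N₁) (Fin N₂) ℝ)
    (V V' : Matrix (Fin N₂) (Fin N₂) (Quaternion ℝ))
    (h : IsQSVD Q U Λ V) (h' : IsQSVD Q U' Λ' V') :
    (Finset.univ.filter fun p : Fin N₁ × Fin N₂ =>
        (p.1 : ℕ) = (p.2 : ℕ) ∧ 0 < Λ p.1 p.2).card =
      (Finset.univ.filter fun p : Fin N₁ × Fin N₂ =>
        (p.1 : ℕ) = (p.2 : ℕ) ∧ 0 < Λ' p.1 p.2).card ∧
    2 * (Finset.univ.filter fun p : Fin N₁ × Fin N₂ =>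
        (p.1 : ℕ) = (p.2 : ℕ) ∧ 0 < Λ p.1 p.2).card = (qf Q).rank := by
  have hrank := h.rank_qf
  have hrank' := h'.rank_qf
  rw [card_diag_pos_eq_card_nonzero_cols h.2.2.1, card_diag_pos_eq_card_nonzero_cols h'.2.2.1]
  omega
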